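/- arXiv:1702.03830 — 3 statements merged into one kernel-verified Lean document; each statement's English description precedes it below -/
import Mathlib

section
/- If a, b, c are distinct odd positive integers, then the polynomial x^a + x^b + x^c - 1 is irreducible over the rationals. -/
/-!
Ljunggren's method, over `ℤ` first. Let `F = X^a + X^b + X^c - 1` with `c < b < a` odd, and let
`F̃` be its mirror. A common root `z` of `F` and `F̃` gives `u + v + w = 1 = u⁻¹ + v⁻¹ + w⁻¹` for
`(u, v, w) = (z^a, z^b, z^c)`, hence `(1 - u)(1 - v)(1 - w) = 0`; but `z^a = 1` with
`z^b = -z^c` gives `1 = (z^a)^(b-c) = (z^(b-c))^a = -1`. So `F` and `F̃` are coprime, and by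
`Polynomial.irreducible_of_mirror` it suffices that `k k̃ = F F̃` forces `k ∈ {±F, ±F̃}`.
The middle coefficient of `k k̃` is the sum of the squares of the coefficients of `k`, here 4,
so `k` has four coefficients `±1`; the leading coefficient and the values at `±1` of `k k̃`
leave `k = ±Q` or `k = ±Q̃` with `Q = X^a + X^i + X^j - 1`, `i, j` odd. The even part of
`Q Q̃` is `-(X^(2a) + X^(a+i) + X^(a+j) + X^(a-i) + X^(a-j) + 1)`, which determines `i` and `j`.
Gauss's lemma passes from `ℤ` to `ℚ`.
-/

open Polynomial Finset

section Roots

variable {K : Type*} [Field K]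

theorem eq_one_of_add_eq_one_of_inv_add_eq_one {u v w : K} (hu : u ≠ 0) (hv : v ≠ 0)
    (hw : w ≠ 0) (h : u + v + w = 1) (h' : u⁻¹ + v⁻¹ + w⁻¹ = 1) :
    u = 1 ∨ v = 1 ∨ w = 1 := by
  field_simp at h'
  have key : (u - 1) * (v - 1) * (w - 1) = 0 := by linear_combination h - h'
  simpa [sub_eq_zero, or_assoc] using key

theorem pow_add_pow_ne_zero_of_pow_eq_one [NeZero (2 : K)] {z : K} {p q r : ℕ} (hp : Odd p)
    (hqr : q ≠ r) (hz : z ^ p = 1) : z ^ q + z ^ r ≠ 0 := by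
  wlog hrq : r < q generalizing q r
  · rw [add_comm]; exact this hqr.symm (hqr.lt_or_gt.resolve_right hrq)
  intro h
  have hz0 : z ≠ 0 := by rintro rfl; simp [hp.pos.ne'] at hz
  have hneg : z ^ (q - r) = -1 := by
    apply mul_right_cancel₀ (pow_ne_zero r hz0)
    rw [← pow_add, Nat.sub_add_cancel hrq.le]; linear_combination h
  have : (-1 : K) = 1 := by
    rw [← hp.neg_one_pow, ← hneg, ← pow_mul, mul_comm, pow_mul, hz, one_pow]
  exact two_ne_zero (by linear_combination -this : (2 : K) = 0)

theorem pow_add_pow_add_pow_ne_one [NeZero (2 : K)] {z : K} {a b c : ℕ}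
    (ha : Odd a) (hb : Odd b) (hc : Odd c) (hcb : c < b) (hba : b < a)
    (h' : 1 + z ^ (a - c) + z ^ (a - b) = z ^ a) : z ^ a + z ^ b + z ^ c ≠ 1 := by
  intro h
  have hz : z ≠ 0 := by rintro rfl; simp [ha.pos.ne', hb.pos.ne', hc.pos.ne'] at h
  have hinv : (z ^ a)⁻¹ + (z ^ b)⁻¹ + (z ^ c)⁻¹ = 1 := by
    have hab : z ^ (a - b) * z ^ b = z ^ a := by rw [← pow_add, Nat.sub_add_cancel hba.le]
    have hac : z ^ (a - c) * z ^ c = z ^ a := by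
      rw [← pow_add, Nat.sub_add_cancel (hcb.trans hba).le]
    field_simp
    linear_combination (z ^ b * z ^ c) * h' - z ^ b * hac - z ^ c * hab
  rcases eq_one_of_add_eq_one_of_inv_add_eq_one (pow_ne_zero a hz) (pow_ne_zero b hz)
    (pow_ne_zero c hz) h hinv with h1 | h1 | h1
  · exact pow_add_pow_ne_zero_of_pow_eq_one ha hcb.ne' h1 (by linear_combination h - h1)
  · exact pow_add_pow_ne_zero_of_pow_eq_one hb (hcb.trans hba).ne' h1
      (by linear_combination h - h1)
  · exact pow_add_pow_ne_zero_of_pow_eq_one hc hba.ne' h1 (by linear_combination h - h1)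

end Roots

namespace Polynomial

theorem mirror_eval_neg_one {R : Type*} [CommRing R] (p : R[X]) :
    p.mirror.eval (-1) = (-1) ^ (p.natDegree + p.natTrailingDegree) * p.eval (-1) := by
  let _ : Invertible (-1 : R) := ⟨-1, by simp, by simp⟩
  have h := eval₂_reverse_mul_pow (RingHom.id R) (-1) p
  rw [show ⅟(-1 : R) = -1 from rfl, ← eval, ← eval] at h
  have hd : (-1 : R) ^ p.natDegree * (-1) ^ p.natDegree = 1 := by rw [← mul_pow]; simp
  rw [mirror, eval_mul, eval_pow, eval_X, pow_add, ← h]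
  linear_combination (-(p.reverse.eval (-1) * (-1) ^ p.natTrailingDegree)) * hd

theorem sq_eval_one_eq_of_mul_mirror_eq {R : Type*} [CommSemiring R] {p q : R[X]}
    (h : p * p.mirror = q * q.mirror) : p.eval 1 ^ 2 = q.eval 1 ^ 2 := by
  simpa only [eval_mul, mirror_eval_one, sq] using congrArg (eval 1) h

section MulMirror

variable {R : Type*} [Semiring R] [NoZeroDivisors R] {p q : R[X]}

theorem natDegree_eq_of_mul_mirror_eq (h : p * p.mirror = q * q.mirror) :
    p.natDegree = q.natDegree := by
  have := congrArg natDegree h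
  rw [natDegree_mul_mirror, natDegree_mul_mirror] at this
  omega

theorem natTrailingDegree_eq_of_mul_mirror_eq (h : p * p.mirror = q * q.mirror) :
    p.natTrailingDegree = q.natTrailingDegree := by
  have := congrArg natTrailingDegree h
  rw [natTrailingDegree_mul_mirror, natTrailingDegree_mul_mirror] at this
  omega

theorem sum_sq_eq_of_mul_mirror_eq (h : p * p.mirror = q * q.mirror) :
    (p.sum fun _ x => x ^ 2) = q.sum fun _ x => x ^ 2 := by
  rw [← coeff_mul_mirror, ← coeff_mul_mirror, h, natDegree_eq_of_mul_mirror_eq h,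
    natTrailingDegree_eq_of_mul_mirror_eq h]

theorem leadingCoeff_mul_trailingCoeff_eq_of_mul_mirror_eq (h : p * p.mirror = q * q.mirror) :
    p.leadingCoeff * p.trailingCoeff = q.leadingCoeff * q.trailingCoeff := by
  simpa only [leadingCoeff_mul, mirror_leadingCoeff] using congrArg leadingCoeff h

end MulMirror

theorem sq_eval_neg_one_eq_of_mul_mirror_eq {R : Type*} [CommRing R] [NoZeroDivisors R]
    {p q : R[X]} (h : p * p.mirror = q * q.mirror) : p.eval (-1) ^ 2 = q.eval (-1) ^ 2 := by
  have := congrArg (eval (-1)) h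
  rw [eval_mul, eval_mul, mirror_eval_neg_one, mirror_eval_neg_one,
    natDegree_eq_of_mul_mirror_eq h, natTrailingDegree_eq_of_mul_mirror_eq h] at this
  have hunit : IsUnit ((-1 : R) ^ (q.natDegree + q.natTrailingDegree)) := isUnit_neg_one.pow _
  apply hunit.mul_left_cancel
  linear_combination this

theorem mul_mirror_C_mul {R : Type*} [CommRing R] [NoZeroDivisors R] {u : R} (hu : u ^ 2 = 1)
    (p : R[X]) :
    C u * p * (C u * p).mirror = p * p.mirror := by
  have hC : C u * C u = (1 : R[X]) := by rw [← C_mul, ← sq, hu, C_1]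
  rw [mirror_mul_of_domain, mirror_C]
  linear_combination (p * p.mirror) * hC


theorem card_support_eq_four_of_sum_sq_eq_four {p : ℤ[X]} (hsum : p.sum (fun _ x => x ^ 2) = 4)
    {m n : ℕ} (hm : m ∈ p.support) (hn : n ∈ p.support) (hmn : m ≠ n) :
    #p.support = 4 ∧ ∀ l ∈ p.support, p.coeff l ^ 2 = 1 := by
  have hsq : ∀ l ∈ p.support, p.coeff l ^ 2 = 1 := by
    intro l hl
    obtain ⟨l', hl', hll'⟩ : ∃ l' ∈ p.support, l' ≠ l := by
      by_cases hml : m = l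
      · exact ⟨n, hn, hml ▸ hmn.symm⟩
      · exact ⟨m, hm, hml⟩
    refine Int.sq_eq_one_of_sq_le_three ?_ (mem_support_iff.mp hl)
    have hle : p.coeff l ^ 2 + p.coeff l' ^ 2 ≤ 4 := by
      rw [← hsum, sum_def, ← sum_pair (f := fun x => p.coeff x ^ 2) hll'.symm]
      exact sum_le_sum_of_subset_of_nonneg (insert_subset hl (singleton_subset_iff.mpr hl'))
        fun _ _ _ => sq_nonneg _
    have := Int.one_le_abs (mem_support_iff.mp hl')
    nlinarith [sq_abs (p.coeff l')]
  refine ⟨?_, hsq⟩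
  rw [sum_def, sum_congr rfl hsq, sum_const, nsmul_one] at hsum
  exact_mod_cast hsum

theorem exists_eq_of_card_support_eq_four {R : Type*} [Semiring R] {p : R[X]}
    (hp : #p.support = 4) (h0 : p.coeff 0 ≠ 0) :
    ∃ i j, 0 < j ∧ j < i ∧ i < p.natDegree ∧ p.coeff i ≠ 0 ∧ p.coeff j ≠ 0 ∧
      p = C p.leadingCoeff * X ^ p.natDegree + C (p.coeff i) * X ^ i + C (p.coeff j) * X ^ j +
        C (p.coeff 0) := by
  obtain ⟨e, x, he, hx, hpe⟩ := card_support_eq.mp hp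
  rw [Fin.sum_univ_four] at hpe
  have h01 : e 0 < e 1 := he (by decide)
  have h12 : e 1 < e 2 := he (by decide)
  have h23 : e 2 < e 3 := he (by decide)
  have hcoeff (m : Fin 4) : p.coeff (e m) = x m := by
    rw [hpe]
    fin_cases m <;> simp (disch := omega) [coeff_X_pow, if_neg]
  have he0 : e 0 = 0 := by
    by_contra hne
    apply h0
    rw [hpe]
    simp (disch := omega) [coeff_X_pow, if_neg]
  have hdeg : p.natDegree = e 3 := by
    refine natDegree_eq_of_le_of_coeff_ne_zero ?_ (by rw [hcoeff]; exact hx 3)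
    rw [hpe]
    compute_degree
    all_goals omega
  refine ⟨e 2, e 1, by omega, h12, by omega, by rw [hcoeff]; exact hx 2,
    by rw [hcoeff]; exact hx 1, ?_⟩
  rw [leadingCoeff, hdeg, hcoeff, hcoeff, hcoeff, ← he0, hcoeff]
  conv_lhs => rw [hpe]
  rw [he0, pow_zero, mul_one]
  abel

theorem Monic.isRelPrime_of_aeval_ne_zero {R K : Type*} [CommSemiring R]
    [Field K] [IsAlgClosed K] [Algebra R K] (hinj : Function.Injective (algebraMap R K))
    {p q : R[X]} (hp : p.Monic) (h : ∀ z : K, aeval z p = 0 → aeval z q ≠ 0) :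
    IsRelPrime p q := by
  intro d hdp hdq
  by_contra hd
  have hdeg := degree_pos_of_not_isUnit_of_dvd_monic hp hd hdp
  rw [← degree_map_eq_of_injective hinj] at hdeg
  obtain ⟨z, hz⟩ := IsAlgClosed.exists_root _ hdeg.ne'
  rw [IsRoot, eval_map_algebraMap] at hz
  exact h z (aeval_eq_zero_of_dvd_aeval_eq_zero hdp hz)
    (aeval_eq_zero_of_dvd_aeval_eq_zero hdq hz)

end Polynomial

section Quadrinomial

variable {R : Type*} [CommRing R] {a i j : ℕ}

theorem degree_X_pow_add_X_pow_sub_one_lt (hi : i < a) (hj : j < a) :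
    (X ^ i + X ^ j - 1 : R[X]).degree < a := by
  compute_degree!
  exact ⟨WithBot.coe_lt_coe.mpr hi, WithBot.coe_lt_coe.mpr hj⟩

theorem monic_X_pow_add_X_pow_add_X_pow_sub_one (hi : i < a) (hj : j < a) :
    (X ^ a + X ^ i + X ^ j - 1 : R[X]).Monic := by
  rw [show (X ^ a + X ^ i + X ^ j - 1 : R[X]) = X ^ a + (X ^ i + X ^ j - 1) by ring]
  exact monic_X_pow_add (degree_X_pow_add_X_pow_sub_one_lt hi hj)

theorem coeff_zero_X_pow_add_X_pow_add_X_pow_sub_one (ha : 0 < a) (hi : 0 < i) (hj : 0 < j) :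
    (X ^ a + X ^ i + X ^ j - 1 : R[X]).coeff 0 = -1 := by
  simp [coeff_X_pow, ha.ne, hi.ne, hj.ne]

variable [Nontrivial R]

theorem natDegree_X_pow_add_X_pow_add_X_pow_sub_one (hi : i < a) (hj : j < a) :
    (X ^ a + X ^ i + X ^ j - 1 : R[X]).natDegree = a := by
  rw [show (X ^ a + X ^ i + X ^ j - 1 : R[X]) = X ^ a + (X ^ i + X ^ j - 1) by ring,
    natDegree_add_eq_left_of_degree_lt, natDegree_X_pow]
  simpa only [degree_X_pow] using degree_X_pow_add_X_pow_sub_one_lt hi hj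

theorem mirror_X_pow_add_X_pow_add_X_pow_sub_one (hi0 : 0 < i) (hj0 : 0 < j)
    (hi : i < a) (hj : j < a) :
    (X ^ a + X ^ i + X ^ j - 1 : R[X]).mirror = 1 + X ^ (a - j) + X ^ (a - i) - X ^ a := by
  have ht : (X ^ a + X ^ i + X ^ j - 1 : R[X]).natTrailingDegree = 0 := by
    rw [natTrailingDegree_eq_zero, coeff_zero_X_pow_add_X_pow_add_X_pow_sub_one (hi0.trans hi)
      hi0 hj0]
    exact Or.inr (neg_ne_zero.mpr one_ne_zero)
  rw [mirror, ht, pow_zero, mul_one, reverse, natDegree_X_pow_add_X_pow_add_X_pow_sub_one hi hj,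
    ← C_1]
  simp only [reflect_add, reflect_sub, reflect_monomial, reflect_C, revAt_le hi.le,
    revAt_le hj.le, revAt_le le_rfl, Nat.sub_self, pow_zero]
  simp
  ring

theorem mul_mirror_add_comp_neg_X (ha : Odd a) (hi : Odd i) (hj : Odd j) (hia : i < a)
    (hja : j < a) :
    (X ^ a + X ^ i + X ^ j - 1 : R[X]) * (X ^ a + X ^ i + X ^ j - 1 : R[X]).mirror +
        ((X ^ a + X ^ i + X ^ j - 1 : R[X]) * (X ^ a + X ^ i + X ^ j - 1 : R[X]).mirror).comp (-X) =
      -2 * (X ^ (2 * a) + X ^ (a + i) + X ^ (a + j) + X ^ (a - i) + X ^ (a - j) + 1) := by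
  rw [mirror_X_pow_add_X_pow_add_X_pow_sub_one hi.pos hj.pos hia hja]
  simp only [mul_comp, add_comp, sub_comp, X_pow_comp, one_comp, ha.neg_pow, hi.neg_pow,
    hj.neg_pow, (Nat.Odd.sub_odd ha hi).neg_pow, (Nat.Odd.sub_odd ha hj).neg_pow]
  ring

end Quadrinomial

theorem sum_sq_coeff_X_pow_add_X_pow_add_X_pow_sub_one {a i j : ℕ} (hj0 : 0 < j) (hji : j < i)
    (hia : i < a) : (X ^ a + X ^ i + X ^ j - 1 : ℤ[X]).sum (fun _ x => x ^ 2) = 4 := by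
  rw [sum_eq_of_subset _ (fun _ => zero_pow two_ne_zero) (s := {a, i, j, 0})]
  · rw [sum_insert (by simp; omega), sum_insert (by simp; omega), sum_insert (by simp; omega),
      sum_singleton]
    simp (disch := omega) [coeff_X_pow, coeff_one, if_neg]
  · intro n hn
    contrapose! hn
    simp only [mem_insert, mem_singleton, not_or] at hn
    simp (disch := omega) [coeff_X_pow, coeff_one, if_neg]

theorem eq_and_eq_of_mul_mirror_eq {a b c i j : ℕ} (ha : Odd a) (hb : Odd b) (hc : Odd c)
    (hi : Odd i) (hj : Odd j) (hcb : c < b) (hba : b < a) (hji : j < i) (hia : i < a)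
    (h : (X ^ a + X ^ b + X ^ c - 1 : ℤ[X]) * (X ^ a + X ^ b + X ^ c - 1 : ℤ[X]).mirror =
      (X ^ a + X ^ i + X ^ j - 1 : ℤ[X]) * (X ^ a + X ^ i + X ^ j - 1 : ℤ[X]).mirror) :
    b = i ∧ c = j := by
  have heven := congrArg (fun P => P + P.comp (-X)) h
  simp only [mul_mirror_add_comp_neg_X ha hb hc hba (hcb.trans hba),
    mul_mirror_add_comp_neg_X ha hi hj hia (hji.trans hia)] at heven
  have key := mul_left_cancel₀ (by norm_num) heven
  have hcoeff (n : ℕ) (hn0 : 0 < n) (hna : n < a) :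
      (if n = b then 1 else 0) + (if n = c then 1 else 0) =
        (if n = i then (1 : ℤ) else 0) + (if n = j then 1 else 0) := by
    have := congrArg (coeff · (a + n)) key
    simp (disch := omega) only [coeff_add, coeff_X_pow, coeff_one, if_neg] at this
    simpa using this
  have hb' := hcoeff b hb.pos hba
  have hc' := hcoeff c hc.pos (hcb.trans hba)
  split_ifs at hb' hc' <;> omega

theorem Int.eq_neg_and_eq_of_sq_eq {u v w t e f : ℤ} (hu : u ^ 2 = 1) (hv : v ^ 2 = 1)
    (hw : w ^ 2 = 1) (he : e ^ 2 = 1) (hf : f ^ 2 = 1) (hut : u * t = -1)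
    (h1 : (u + v + w + t) ^ 2 = 4) (h2 : (-u + v * e + w * f + t) ^ 2 = 16) :
    t = -u ∧ w = v ∧ (v = u ∧ e = -1 ∧ f = -1 ∨ v = -u ∧ e = 1 ∧ f = 1) := by
  obtain rfl : t = -u := by linear_combination u * hut - t * hu
  rw [sq_eq_one_iff] at hu hv hw he hf
  rcases hu with rfl | rfl <;> rcases hv with rfl | rfl <;> rcases hw with rfl | rfl <;>
    rcases he with rfl | rfl <;> rcases hf with rfl | rfl <;>
    revert h1 h2 <;> norm_num

theorem exists_eq_quadrinomial_of_mul_mirror_eq {a b c : ℕ} (ha : Odd a) (hb : Odd b)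
    (hc : Odd c) (hcb : c < b) (hba : b < a) {k : ℤ[X]}
    (h : (X ^ a + X ^ b + X ^ c - 1 : ℤ[X]) * (X ^ a + X ^ b + X ^ c - 1 : ℤ[X]).mirror =
      k * k.mirror) :
    ∃ i j, 0 < j ∧ j < i ∧ i < a ∧
      k.coeff a ^ 2 = 1 ∧ k.coeff i ^ 2 = 1 ∧ k.coeff j ^ 2 = 1 ∧
      k.coeff a * k.coeff 0 = -1 ∧
      k = C (k.coeff a) * X ^ a + C (k.coeff i) * X ^ i + C (k.coeff j) * X ^ j +
        C (k.coeff 0) := by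
  set F : ℤ[X] := X ^ a + X ^ b + X ^ c - 1
  have hFd : F.natDegree = a := natDegree_X_pow_add_X_pow_add_X_pow_sub_one hba (hcb.trans hba)
  have hF0 : F.coeff 0 = -1 := coeff_zero_X_pow_add_X_pow_add_X_pow_sub_one ha.pos hb.pos hc.pos
  have hFt : F.natTrailingDegree = 0 := natTrailingDegree_eq_zero.mpr (Or.inr (by simp [hF0]))
  have hkd : k.natDegree = a := (natDegree_eq_of_mul_mirror_eq h).symm.trans hFd
  have hkt : k.natTrailingDegree = 0 := (natTrailingDegree_eq_of_mul_mirror_eq h).symm.trans hFt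
  have hk : k ≠ 0 := by
    rintro rfl
    exact ha.pos.ne (natDegree_zero.symm.trans hkd)
  have hk0 : k.coeff 0 ≠ 0 := (natTrailingDegree_eq_zero.mp hkt).resolve_left hk
  have hka : k.coeff a ≠ 0 := hkd ▸ leadingCoeff_ne_zero.mpr hk
  obtain ⟨hcard, hsq⟩ := card_support_eq_four_of_sum_sq_eq_four
    (by rw [← sum_sq_eq_of_mul_mirror_eq h,
      sum_sq_coeff_X_pow_add_X_pow_add_X_pow_sub_one hc.pos hcb hba])
    (mem_support_iff.mpr hka) (mem_support_iff.mpr hk0) ha.pos.ne'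
  obtain ⟨i, j, hj0, hji, hia, hi, hj, hk⟩ := exists_eq_of_card_support_eq_four hcard hk0
  rw [leadingCoeff, hkd] at hk
  refine ⟨i, j, hj0, hji, hkd ▸ hia, hsq a (mem_support_iff.mpr hka),
    hsq i (mem_support_iff.mpr hi), hsq j (mem_support_iff.mpr hj), ?_, hk⟩
  have := leadingCoeff_mul_trailingCoeff_eq_of_mul_mirror_eq h
  rwa [(monic_X_pow_add_X_pow_add_X_pow_sub_one hba (hcb.trans hba)).leadingCoeff,
    trailingCoeff, hFt, hF0, leadingCoeff, trailingCoeff, hkd, hkt, eq_comm, one_mul] at this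

theorem exists_eq_of_mul_mirror_eq {a b c : ℕ} (ha : Odd a) (hb : Odd b) (hc : Odd c)
    (hcb : c < b) (hba : b < a) {k : ℤ[X]}
    (h : (X ^ a + X ^ b + X ^ c - 1 : ℤ[X]) * (X ^ a + X ^ b + X ^ c - 1 : ℤ[X]).mirror =
      k * k.mirror) :
    ∃ u : ℤ, u ^ 2 = 1 ∧ ∃ i j, 0 < j ∧ j < i ∧ i < a ∧
      (Odd i ∧ Odd j ∧ k = C u * (X ^ a + X ^ i + X ^ j - 1) ∨
        Even i ∧ Even j ∧ k = C u * (X ^ a - X ^ i - X ^ j - 1)) := by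
  obtain ⟨i, j, hj0, hji, hia, hu, hv2, hw2, hut, hk⟩ :=
    exists_eq_quadrinomial_of_mul_mirror_eq ha hb hc hcb hba h
  have h1 := sq_eval_one_eq_of_mul_mirror_eq h
  have h2 := sq_eval_neg_one_eq_of_mul_mirror_eq h
  rw [hk] at h1 h2
  simp only [eval_add, eval_sub, eval_mul, eval_C, eval_pow, eval_X, eval_one, one_pow,
    mul_one, ha.neg_one_pow, hb.neg_one_pow, hc.neg_one_pow] at h1 h2
  obtain ⟨ht, hw, hv⟩ := Int.eq_neg_and_eq_of_sq_eq hu hv2 hw2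
    (sq_eq_one_iff.mpr (neg_one_pow_eq_or ℤ i)) (sq_eq_one_iff.mpr (neg_one_pow_eq_or ℤ j)) hut
    (by linear_combination -h1) (by linear_combination -h2)
  refine ⟨k.coeff a, hu, i, j, hj0, hji, hia, ?_⟩
  rcases hv with ⟨hv, hei, hej⟩ | ⟨hv, hei, hej⟩
  · refine .inl ⟨(neg_one_pow_eq_neg_one_iff_odd (by decide)).mp hei,
      (neg_one_pow_eq_neg_one_iff_odd (by decide)).mp hej, hk.trans ?_⟩
    rw [hw, hv, ht, C_neg]
    ring
  · refine .inr ⟨(neg_one_pow_eq_one_iff_even (by decide)).mp hei,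
      (neg_one_pow_eq_one_iff_even (by decide)).mp hej, hk.trans ?_⟩
    rw [hw, hv, ht, C_neg]
    ring

theorem eq_or_eq_neg_or_eq_mirror_or_eq_neg_mirror {a b c : ℕ} (ha : Odd a) (hb : Odd b)
    (hc : Odd c) (hcb : c < b) (hba : b < a) {k : ℤ[X]}
    (h : (X ^ a + X ^ b + X ^ c - 1 : ℤ[X]) * (X ^ a + X ^ b + X ^ c - 1 : ℤ[X]).mirror =
      k * k.mirror) :
    k = X ^ a + X ^ b + X ^ c - 1 ∨ k = -(X ^ a + X ^ b + X ^ c - 1) ∨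
      k = (X ^ a + X ^ b + X ^ c - 1 : ℤ[X]).mirror ∨
      k = -(X ^ a + X ^ b + X ^ c - 1 : ℤ[X]).mirror := by
  obtain ⟨u, hu, i, j, hj0, hji, hia, ⟨hi, hj, rfl⟩ | ⟨hi, hj, rfl⟩⟩ :=
    exists_eq_of_mul_mirror_eq ha hb hc hcb hba h
  · rw [mul_mirror_C_mul hu] at h
    obtain ⟨rfl, rfl⟩ := eq_and_eq_of_mul_mirror_eq ha hb hc hi hj hcb hba hji hia h
    rcases sq_eq_one_iff.mp hu with rfl | rfl <;> simp
  · have hmirror : C u * (X ^ a - X ^ i - X ^ j - 1 : ℤ[X]) =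
        C (-u) * (X ^ a + X ^ (a - j) + X ^ (a - i) - 1 : ℤ[X]).mirror := by
      rw [mirror_X_pow_add_X_pow_add_X_pow_sub_one (by omega) (by omega) (by omega) (by omega),
        Nat.sub_sub_self hia.le, Nat.sub_sub_self (hji.trans hia).le, C_neg]
      ring
    rw [hmirror, mul_mirror_C_mul (by rwa [neg_sq]), mirror_mirror,
      mul_comm (X ^ a + X ^ (a - j) + X ^ (a - i) - 1 : ℤ[X]).mirror] at h
    obtain ⟨hb', hc'⟩ := eq_and_eq_of_mul_mirror_eq ha hb hc
      (Nat.Odd.sub_even (hji.trans hia).le ha hj) (Nat.Odd.sub_even hia.le ha hi) hcb hba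
      (by omega) (by omega) h
    rw [hmirror, ← hb', ← hc']
    rcases sq_eq_one_iff.mp hu with rfl | rfl <;> simp

theorem irreducible_X_pow_add_X_pow_add_X_pow_sub_one {a b c : ℕ} (ha : Odd a) (hb : Odd b)
    (hc : Odd c) (hcb : c < b) (hba : b < a) :
    Irreducible (X ^ a + X ^ b + X ^ c - 1 : ℤ[X]) := by
  refine irreducible_of_mirror (not_isUnit_of_natDegree_pos _ ?_)
    (fun k => eq_or_eq_neg_or_eq_mirror_or_eq_neg_mirror ha hb hc hcb hba) ?_
  · rw [natDegree_X_pow_add_X_pow_add_X_pow_sub_one hba (hcb.trans hba)]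
    exact ha.pos
  refine (monic_X_pow_add_X_pow_add_X_pow_sub_one hba (hcb.trans hba)).isRelPrime_of_aeval_ne_zero
    (algebraMap ℤ ℂ).injective_int fun z hz hz' => ?_
  rw [mirror_X_pow_add_X_pow_add_X_pow_sub_one hb.pos hc.pos hba (hcb.trans hba)] at hz'
  simp only [map_add, map_sub, map_pow, aeval_X, map_one] at hz hz'
  exact pow_add_pow_add_pow_ne_one ha hb hc hcb hba (by linear_combination hz')
    (by linear_combination hz)

theorem irreducible_X_pow_add_X_pow_add_X_pow_sub_one_rat {a b c : ℕ} (ha : Odd a) (hb : Odd b)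
    (hc : Odd c) (hcb : c < b) (hba : b < a) :
    Irreducible (X ^ a + X ^ b + X ^ c - 1 : ℚ[X]) := by
  have := (IsPrimitive.Int.irreducible_iff_irreducible_map_cast
    (monic_X_pow_add_X_pow_add_X_pow_sub_one hba (hcb.trans hba)).isPrimitive).mp
    (irreducible_X_pow_add_X_pow_add_X_pow_sub_one ha hb hc hcb hba)
  simpa using this

open Polynomial in
theorem stmt_8_general (a b c : ℕ)
    (hoa : Odd a) (hob : Odd b) (hoc : Odd c)
    (hab : a ≠ b) (hac : a ≠ c) (hbc : b ≠ c) :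
    Irreducible (X^a + X^b + X^c - 1 : Polynomial ℚ) := by
  wlog hcb : c < b generalizing b c
  · rw [add_right_comm]
    exact this c b hoc hob hac hab hbc.symm (hbc.lt_or_gt.resolve_right hcb)
  wlog hba : b < a generalizing a b c
  · have hab' := hab.lt_or_gt.resolve_right hba
    rcases hac.lt_or_gt with hac' | hca
    · rw [show (X ^ a + X ^ b + X ^ c : ℚ[X]) = X ^ b + X ^ c + X ^ a by ring]
      exact this b hob c a hoc hoa hbc hab.symm hac.symm hac' hcb
    · rw [add_comm (X ^ a)]
      exact this b hob a c hoa hoc hab.symm hbc hac hca hab'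
  exact irreducible_X_pow_add_X_pow_add_X_pow_sub_one_rat hoa hob hoc hcb hba

open Polynomial in
theorem stmt_8 (a b c : ℕ) (ha : 0 < a) (hb : 0 < b) (hc : 0 < c)
    (hoa : Odd a) (hob : Odd b) (hoc : Odd c)
    (hab : a ≠ b) (hac : a ≠ c) (hbc : b ≠ c) :
    Irreducible (X^a + X^b + X^c - 1 : Polynomial ℚ) :=
  stmt_8_general a b c hoa hob hoc hab hac hbc
end

section
/- Let a = b + c with b, c positive integers and a = b + c, gcd(b, c) = 1. If η is a complex root of unity with η^b = 1 or η^b = -1 or η^c = 1 or η^c = -1, then η^a + η^b + η^c - 1 ≠ 0. -/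
/-! Writing `x = η ^ b` and `y = η ^ c`, the expression is `x * y + x + y - 1`, which is `2 * y`
when `x = 1` and `-2` when `x = -1`; the situation is symmetric in `x` and `y`, and `y ≠ 0`
because a root of unity is nonzero. -/

theorem mul_add_add_sub_one_ne_zero_of_sign {R : Type*} [CommRing R] [NoZeroDivisors R]
    [NeZero (2 : R)] {x y : R} (hx : x = 1 ∨ x = -1) (hy : y ≠ 0) :
    x * y + x + y - 1 ≠ 0 := by
  rcases hx with rfl | rfl
  · rw [show 1 * y + 1 + y - 1 = 2 * y by ring]
    exact mul_ne_zero two_ne_zero hy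
  · rw [show -1 * y + -1 + y - 1 = -2 by ring]
    exact neg_ne_zero.mpr two_ne_zero

theorem stmt_11_general (a b c : ℕ) (habc : a = b + c)
    (η : ℂ) (hroot : ∃ n : ℕ, 1 ≤ n ∧ η^n = 1)
    (h : η^b = 1 ∨ η^b = -1 ∨ η^c = 1 ∨ η^c = -1) :
    η^a + η^b + η^c - 1 ≠ 0 := by
  obtain ⟨n, hn, hηn⟩ := hroot
  have hη : η ≠ 0 := (IsUnit.of_pow_eq_one hηn (by omega)).ne_zero
  rw [habc, pow_add]
  rcases or_assoc.mpr h with hb | hc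
  · exact mul_add_add_sub_one_ne_zero_of_sign hb (pow_ne_zero c hη)
  · rw [mul_comm, add_right_comm]
    exact mul_add_add_sub_one_ne_zero_of_sign hc (pow_ne_zero b hη)

theorem stmt_11 (a b c : ℕ) (hb : 0 < b) (hc : 0 < c) (habc : a = b + c)
    (hgcd : Nat.gcd b c = 1) (η : ℂ) (hroot : ∃ n : ℕ, 1 ≤ n ∧ η^n = 1)
    (h : η^b = 1 ∨ η^b = -1 ∨ η^c = 1 ∨ η^c = -1) :
    η^a + η^b + η^c - 1 ≠ 0 :=
  stmt_11_general a b c habc η hroot h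
end

section
/- There are no positive integers d > e and a > b > c with a = b + c such that x^a + x^b + x^c - 1 = (x + 1)(x^d + x^e - 1) as polynomials over the integers. -/
/-- With `s = (-1)^b` and `t = (-1)^c` the left-hand side is `(s + 1) * (t + 1) - 2 ∈ {-2, 2}`. -/
lemma neg_one_pow_add_add_pow_add_pow_sub_one_ne_zero (b c : ℕ) :
    (-1 : ℤ) ^ (b + c) + (-1) ^ b + (-1) ^ c - 1 ≠ 0 := by
  rw [pow_add]
  rcases neg_one_pow_eq_or ℤ b with hb | hb <;> rcases neg_one_pow_eq_or ℤ c with hc | hc <;>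
    simp [hb, hc]

open Polynomial in
theorem stmt_13 : ¬ ∃ a b c d e : ℕ, 0 < c ∧ 0 < e ∧ c < b ∧ b < a ∧ e < d ∧
    a = b + c ∧
    (X^a + X^b + X^c - 1 : Polynomial ℤ) = (X + 1) * (X^d + X^e - 1) := by
  rintro ⟨a, b, c, d, e, -, -, -, -, -, rfl, heq⟩
  apply neg_one_pow_add_add_pow_add_pow_sub_one_ne_zero b c
  simpa using congrArg (eval (-1)) heq
end
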